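/- For f ∈ S(ℝ²), the quantity ⟨f_Ω, f⟩ (dual pairing of the tempered distribution f_Ω against f) equals ∫₀^{2π} |f̂(Ω cos φ, Ω sin φ)|² dφ; in particular it is nonnegative and defines a seminorm f ↦ ⟨f_Ω, f⟩^{1/2} on S(ℝ²). -/

import Mathlib

/-!
Rotating the angle variable shows `j₀(Ω|x - y|) = ∫₀^{2π} conj (e_φ x) * e_φ y dφ` for the plane
waves `e_φ x = exp (-i Ω (cos φ, sin φ) · x)`, so `f_Ω` is a superposition of the plane waves on the
circle of radius `Ω`. Since `|e_φ| = 1`, `f ∈ L¹` and the circle has finite measure, Fubini applies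
twice and turns `⟨f_Ω, f⟩` into `(2π)⁻² ∫₀^{2π} |∫ e_φ f|² dφ = ∫₀^{2π} |f̂(Ω cos φ, Ω sin φ)|² dφ`.
-/

noncomputable section
open MeasureTheory

/-- j₀(s) = ∫₀^{2π} e^{i s cos φ} dφ. -/
def j0 (s : ℂ) : ℂ := ∫ φ in (0:ℝ)..(2 * Real.pi), Complex.exp (Complex.I * s * Complex.cos (φ : ℂ))

/-- Unitary Fourier transform on ℝ². -/
def FT (f : ℝ × ℝ → ℂ) (k : ℝ × ℝ) : ℂ :=
  (2 * Real.pi : ℂ)⁻¹ * ∫ x : ℝ × ℝ, Complex.exp (-Complex.I * ((k.1 * x.1 + k.2 * x.2 : ℝ) : ℂ)) * f x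

/-- f_Ω(x) = (2π)⁻² (f * j₀(Ω|·|))(x). -/
def projOmega (Ω : ℝ) (f : ℝ × ℝ → ℂ) (x : ℝ × ℝ) : ℂ :=
  (2 * Real.pi : ℂ) ^ (-2 : ℤ) *
    ∫ y : ℝ × ℝ, f y * j0 ((Ω * Real.sqrt ((x.1 - y.1) ^ 2 + (x.2 - y.2) ^ 2) : ℝ) : ℂ)

open Function ComplexConjugate

section KernelPairing

variable {𝕜 X Φ : Type*} [RCLike 𝕜] [MeasurableSpace X] [MeasurableSpace Φ]
  {μ : Measure X} {ν : Measure Φ}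

theorem integral_mul_integral_comm_of_norm_le [SFinite μ] [IsFiniteMeasure ν] {g : X → 𝕜}
    (hg : Integrable g μ) {h : X → Φ → 𝕜} (hh : AEStronglyMeasurable (uncurry h) (μ.prod ν))
    {C : ℝ} (hC : ∀ x φ, ‖h x φ‖ ≤ C) :
    ∫ x, g x * ∫ φ, h x φ ∂ν ∂μ = ∫ φ, ∫ x, g x * h x φ ∂μ ∂ν := by
  have hint : Integrable (uncurry fun x φ => g x * h x φ) (μ.prod ν) := by
    refine (hg.norm.mul_prod (integrable_const C)).mono' (hg.1.comp_fst.mul hh) ?_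
    filter_upwards with p
    simpa only [uncurry, norm_mul] using mul_le_mul_of_nonneg_left (hC p.1 p.2) (norm_nonneg _)
  simp_rw [← integral_const_mul]
  exact integral_integral_swap hint

theorem integral_conj_integral_kernel_mul_eq [SFinite μ] [IsFiniteMeasure ν] {f : X → 𝕜}
    (hf : Integrable f μ) {w : Φ → X → 𝕜} (hw : StronglyMeasurable (uncurry w)) {C : ℝ}
    (hC : ∀ φ x, ‖w φ x‖ ≤ C) :
    ∫ x, conj (∫ y, f y * ∫ φ, conj (w φ x) * w φ y ∂ν ∂μ) * f x ∂μ
      = ↑(∫ φ, ‖∫ x, w φ x * f x ∂μ‖ ^ 2 ∂ν) := by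
  set F : Φ → 𝕜 := fun φ => ∫ x, w φ x * f x ∂μ
  have hF : AEStronglyMeasurable F ν :=
    (hw.aestronglyMeasurable.mul hf.1.comp_snd).integral_prod_right'
  have hw_conj_mul (x : X) : StronglyMeasurable fun p : X × Φ => conj (w p.2 x) * w p.2 p.1 :=
    (RCLike.continuous_conj.comp_stronglyMeasurable
      (hw.comp_measurable (measurable_snd.prodMk measurable_const))).mul
      (hw.comp_measurable measurable_swap)
  have inner (x : X) :
      ∫ y, f y * ∫ φ, conj (w φ x) * w φ y ∂ν ∂μ = ∫ φ, conj (w φ x) * F φ ∂ν := by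
    rw [integral_mul_integral_comm_of_norm_le hf (hw_conj_mul x).aestronglyMeasurable
      (C := C * C) fun y φ => by
        rw [norm_mul, RCLike.norm_conj]
        exact mul_le_mul (hC φ x) (hC φ y) (norm_nonneg _) ((norm_nonneg _).trans (hC φ x))]
    congr 1; ext φ
    rw [← integral_const_mul]
    congr 1; ext y; ring
  have hF_le (φ : Φ) : ‖F φ‖ ≤ ∫ x, C * ‖f x‖ ∂μ :=
    norm_integral_le_of_norm_le (hf.norm.const_mul C) <| .of_forall fun x => by
      rw [norm_mul]; exact mul_le_mul_of_nonneg_right (hC φ x) (norm_nonneg _)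
  calc ∫ x, conj (∫ y, f y * ∫ φ, conj (w φ x) * w φ y ∂ν ∂μ) * f x ∂μ
      = ∫ x, f x * ∫ φ, w φ x * conj (F φ) ∂ν ∂μ := by
        congr 1; ext x
        rw [inner, ← integral_conj, mul_comm]
        simp only [map_mul, RCLike.conj_conj]
    _ = ∫ φ, ∫ x, f x * (w φ x * conj (F φ)) ∂μ ∂ν :=
        integral_mul_integral_comm_of_norm_le hf
          ((hw.comp_measurable measurable_swap).aestronglyMeasurable.mul
            (RCLike.continuous_conj.comp_aestronglyMeasurable hF).comp_snd)
          fun x φ => by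
            rw [norm_mul, RCLike.norm_conj]
            exact mul_le_mul (hC φ x) (hF_le φ) (norm_nonneg _) ((norm_nonneg _).trans (hC φ x))
    _ = ∫ φ, ((‖F φ‖ ^ 2 : ℝ) : 𝕜) ∂ν := by
        congr 1; ext φ
        simp_rw [← mul_assoc, mul_comm (f _)]
        rw [integral_mul_const, RCLike.mul_conj, RCLike.ofReal_pow]
    _ = _ := integral_ofReal

end KernelPairing

open Real

theorem integral_exp_I_mul_cos_add_sin (a b : ℝ) :
    ∫ φ in (0:ℝ)..2 * π, Complex.exp (Complex.I * ↑(a * cos φ + b * sin φ))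
      = j0 ↑√(a ^ 2 + b ^ 2) := by
  set z : ℂ := ⟨a, b⟩
  have hr : √(a ^ 2 + b ^ 2) = ‖z‖ := by rw [Complex.norm_def, Complex.normSq_mk]; ring_nf
  have hshift (φ : ℝ) : a * cos φ + b * sin φ = ‖z‖ * cos (φ - z.arg) := by
    have ha : ‖z‖ * cos z.arg = a := Complex.norm_mul_cos_arg z
    have hb : ‖z‖ * sin z.arg = b := Complex.norm_mul_sin_arg z
    rw [cos_sub, ← ha, ← hb]; ring
  set g : ℝ → ℂ := fun t => Complex.exp (Complex.I * ↑(‖z‖ * cos t))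
  have hg : Periodic g (2 * π) := fun t => by simp only [g, cos_add_two_pi]
  calc _ = ∫ φ in (0:ℝ)..2 * π, g (φ - z.arg) := by simp_rw [hshift, g]
    _ = ∫ t in -z.arg..-z.arg + 2 * π, g t := by
        rw [intervalIntegral.integral_comp_sub_right]; ring_nf
    _ = ∫ t in (0:ℝ)..0 + 2 * π, g t := hg.intervalIntegral_add_eq _ 0
    _ = _ := by simp [g, j0, hr, mul_assoc]

theorem j0_abs (s : ℝ) : j0 ↑|s| = j0 ↑s := by
  simpa [j0, mul_assoc, sqrt_sq_eq_abs] using (integral_exp_I_mul_cos_add_sin s 0).symm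

def planeWave (k x : ℝ × ℝ) : ℂ := Complex.exp (-Complex.I * ↑(k.1 * x.1 + k.2 * x.2))

@[fun_prop]
theorem Continuous.planeWave {α : Type*} [TopologicalSpace α] {k x : α → ℝ × ℝ}
    (hk : Continuous k) (hx : Continuous x) : Continuous fun a => planeWave (k a) (x a) := by
  unfold _root_.planeWave; fun_prop

theorem norm_planeWave (k x : ℝ × ℝ) : ‖planeWave k x‖ = 1 := by
  simp [planeWave, Complex.norm_exp]

theorem conj_planeWave_mul_planeWave (k x y : ℝ × ℝ) :
    conj (planeWave k x) * planeWave k y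
      = Complex.exp (Complex.I * ↑(k.1 * (x.1 - y.1) + k.2 * (x.2 - y.2))) := by
  rw [planeWave, planeWave, ← Complex.exp_conj, ← Complex.exp_add]
  congr 1
  simp only [map_mul, map_neg, Complex.conj_I, Complex.conj_ofReal]
  push_cast; ring

theorem j0_mul_dist_eq_integral_planeWave (Ω : ℝ) (x y : ℝ × ℝ) :
    j0 ↑(Ω * √((x.1 - y.1) ^ 2 + (x.2 - y.2) ^ 2))
      = ∫ φ in Set.Ioc 0 (2 * π), conj (planeWave (Ω * cos φ, Ω * sin φ) x)
          * planeWave (Ω * cos φ, Ω * sin φ) y := by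
  have hsq : (Ω * √((x.1 - y.1) ^ 2 + (x.2 - y.2) ^ 2)) ^ 2
      = (Ω * (x.1 - y.1)) ^ 2 + (Ω * (x.2 - y.2)) ^ 2 := by
    rw [mul_pow, sq_sqrt (by positivity)]; ring
  rw [← j0_abs, ← sqrt_sq_eq_abs, hsq, ← integral_exp_I_mul_cos_add_sin,
    intervalIntegral.integral_of_le (by positivity)]
  congr 1; ext φ
  rw [conj_planeWave_mul_planeWave]
  congr 3; ring

theorem pairing_fOmega_f_general (Ω : ℝ) (f : SchwartzMap (ℝ × ℝ) ℂ) :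
    (∫ x : ℝ × ℝ, (starRingEnd ℂ) (projOmega Ω (fun y => f y) x) * f x)
      = ((∫ φ in (0:ℝ)..(2 * Real.pi),
          ‖FT (fun y => f y) (Ω * Real.cos φ, Ω * Real.sin φ)‖ ^ 2 : ℝ) : ℂ) ∧
    0 ≤ (∫ φ in (0:ℝ)..(2 * Real.pi),
          ‖FT (fun y => f y) (Ω * Real.cos φ, Ω * Real.sin φ)‖ ^ 2 : ℝ) := by
  have hπ : (0:ℝ) ≤ 2 * π := by positivity
  set w : ℝ → ℝ × ℝ → ℂ := fun φ => planeWave (Ω * cos φ, Ω * sin φ)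
  have hw : StronglyMeasurable (uncurry w) :=
    (by simp only [w, uncurry_def]; fun_prop : Continuous (uncurry w)).stronglyMeasurable
  have hproj (x : ℝ × ℝ) : projOmega Ω (fun y => f y) x = (2 * π : ℂ) ^ (-2 : ℤ) *
      ∫ y, f y * ∫ φ in Set.Ioc 0 (2 * π), conj (w φ x) * w φ y := by
    simp only [projOmega, j0_mul_dist_eq_integral_planeWave, w]
  have hFT (k : ℝ × ℝ) :
      ‖FT (fun y => f y) k‖ ^ 2 = (2 * π) ^ (-2 : ℤ) * ‖∫ x, planeWave k x * f x‖ ^ 2 := by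
    have hFT_eq : FT (fun y => f y) k = (2 * π : ℂ)⁻¹ * ∫ x, planeWave k x * f x := rfl
    have h2π : ‖(2 * π : ℂ)‖ = 2 * π := by simp [abs_of_pos pi_pos]
    rw [hFT_eq, norm_mul, mul_pow, norm_inv, h2π, inv_pow, zpow_neg, zpow_ofNat]
  refine ⟨?_, intervalIntegral.integral_nonneg hπ fun _ _ => by positivity⟩
  simp_rw [hproj, map_mul, mul_assoc, integral_const_mul,
    integral_conj_integral_kernel_mul_eq f.integrable hw fun φ x => (norm_planeWave _ x).le,
    hFT, intervalIntegral.integral_const_mul, intervalIntegral.integral_of_le hπ]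
  simp [w, map_ofNat]

/-- ⟨f_Ω, f⟩ equals the L²(S¹)-norm squared of f̂ restricted to the circle of radius Ω;
in particular it is nonnegative, so f ↦ ⟨f_Ω, f⟩^{1/2} is a seminorm on S(ℝ²). -/
theorem pairing_fOmega_f (Ω : ℝ) (hΩ : 0 < Ω) (f : SchwartzMap (ℝ × ℝ) ℂ) :
    (∫ x : ℝ × ℝ, (starRingEnd ℂ) (projOmega Ω (fun y => f y) x) * f x)
      = ((∫ φ in (0:ℝ)..(2 * Real.pi),
          ‖FT (fun y => f y) (Ω * Real.cos φ, Ω * Real.sin φ)‖ ^ 2 : ℝ) : ℂ) ∧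
    0 ≤ (∫ φ in (0:ℝ)..(2 * Real.pi),
          ‖FT (fun y => f y) (Ω * Real.cos φ, Ω * Real.sin φ)‖ ^ 2 : ℝ) :=
  pairing_fOmega_f_general Ω f
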